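/- Suppose |h_θ(x)| ≤ 1 for all θ ∈ Ω and x ∈ 𝒳. Let p₀ be the Gaussian density proportional to exp(−(λ₁/λ₂)‖θ‖²) and define ℱ_KL(R) = { x ↦ E_q[h_θ(x)] : q ∈ 𝒫₂, KL(q‖p₀) ≤ R }. Then for any R ≤ 1/2 and any set S ⊂ 𝒳 of size n, the empirical Rademacher complexity satisfies ℜ̂_S(ℱ_KL(R)) ≤ 2√(R/n). -/

import Mathlib

open MeasureTheory Real

/-- The admissible class `𝒫₂`: smooth positive densities with unit mass, finite
second moment, and well-defined entropy. -/
def Adm (d : ℕ) (q : EuclideanSpace ℝ (Fin d) → ℝ) : Prop :=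
  (∀ θ, 0 < q θ) ∧ ContDiff ℝ (⊤ : ℕ∞) q ∧ Integrable q ∧ (∫ θ, q θ) = 1 ∧
    Integrable (fun θ => q θ * ‖θ‖ ^ 2) ∧
    Integrable (fun θ => q θ * Real.log (q θ))

lemma gauss_integrable {d : ℕ} {b : ℝ} (hb : 0 < b) :
    Integrable fun v : EuclideanSpace ℝ (Fin d) => Real.exp (-b * ‖v‖ ^ 2) := by
  have h := (GaussianFourier.integrable_cexp_neg_mul_sq_norm_add (V := EuclideanSpace ℝ (Fin d))
      (b := (b : ℂ)) (by simpa using hb) 0 0).re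
  refine h.congr (Filter.Eventually.of_forall fun v => ?_)
  show (Complex.exp _).re = _
  rw [zero_mul, add_zero,
    show -(b : ℂ) * (‖v‖ : ℂ) ^ 2 = ((-b * ‖v‖ ^ 2 : ℝ) : ℂ) by push_cast; ring,
    ← Complex.ofReal_exp, Complex.ofReal_re]

lemma gauss_sq_integrable {d : ℕ} {b : ℝ} (hb : 0 < b) :
    Integrable fun v : EuclideanSpace ℝ (Fin d) => Real.exp (-b * ‖v‖ ^ 2) * ‖v‖ ^ 2 := by
  have hint : Integrable fun v : EuclideanSpace ℝ (Fin d) => Real.exp (-(b / 2) * ‖v‖ ^ 2) :=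
    gauss_integrable (by positivity)
  refine (hint.const_mul (2 / b)).mono'
    ((((continuous_const.mul (continuous_norm.pow 2)).rexp).mul
      (continuous_norm.pow 2)).aestronglyMeasurable) (Filter.Eventually.of_forall fun v => ?_)
  rw [Real.norm_eq_abs, abs_of_nonneg (by positivity)]
  set t := ‖v‖ ^ 2 with ht
  have h1 : (0 : ℝ) ≤ t := by positivity
  have hxe : (b / 2) * t ≤ Real.exp ((b / 2) * t) :=
    le_trans (by linarith) (Real.add_one_le_exp _)
  have ht2 : t ≤ (2 / b) * Real.exp ((b / 2) * t) := by
    calc t = (2 / b) * ((b / 2) * t) := by field_simp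
    _ ≤ (2 / b) * Real.exp ((b / 2) * t) := by gcongr
  calc Real.exp (-b * t) * t ≤ Real.exp (-b * t) * ((2 / b) * Real.exp ((b / 2) * t)) := by
        have := Real.exp_pos (-b * t); gcongr
    _ = (2 / b) * (Real.exp (-b * t) * Real.exp ((b / 2) * t)) := by ring
    _ = 2 / b * Real.exp (-(b / 2) * t) := by rw [← Real.exp_add]; congr 1; ring

set_option maxHeartbeats 4000000

/-- Rademacher complexity bound for a KL ball of mean field neural networks
(Chen et al. 2020): if `|h_θ(x)| ≤ 1`, `p₀ ∝ exp(-(λ₁/λ₂)‖θ‖²)`, and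
`ℱ_KL(R) = {x ↦ E_q[h_θ(x)] : q ∈ 𝒫₂, KL(q‖p₀) ≤ R}`, then for `R ≤ 1/2`,
`ℜ̂_S(ℱ_KL(R)) ≤ 2√(R/n)`. -/
theorem rademacher_complexity_KL_ball
    (d : ℕ) {𝒳 : Type*} (h : EuclideanSpace ℝ (Fin d) → 𝒳 → ℝ)
    (hbdd : ∀ θ x, |h θ x| ≤ 1)
    (hmeas : ∀ x, Measurable (fun θ => h θ x))
    (lam1 lam2 : ℝ) (hlam1 : 0 < lam1) (hlam2 : 0 < lam2)
    (Z0 : ℝ) (hZ0 : Z0 = ∫ θ : EuclideanSpace ℝ (Fin d),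
        Real.exp (-(lam1 / lam2) * ‖θ‖ ^ 2))
    (p0 : EuclideanSpace ℝ (Fin d) → ℝ)
    (hp0 : ∀ θ, p0 θ = Real.exp (-(lam1 / lam2) * ‖θ‖ ^ 2) / Z0)
    (R : ℝ) (hR0 : 0 ≤ R) (hR : R ≤ 1 / 2)
    (n : ℕ) (hn : 0 < n) (S : Fin n → 𝒳) :
    (1 / 2 ^ n) * ∑ s : Fin n → Bool,
        ⨆ q : {q : EuclideanSpace ℝ (Fin d) → ℝ //
            Adm d q ∧ Integrable (fun θ => q θ * Real.log (q θ / p0 θ)) ∧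
            (∫ θ, q θ * Real.log (q θ / p0 θ)) ≤ R},
          (1 / (n : ℝ)) * ∑ i, (if s i then (1 : ℝ) else -1) *
            ∫ θ, h θ (S i) * q.1 θ
      ≤ 2 * Real.sqrt (R / n) := by
  have hnR : (0 : ℝ) < n := Nat.cast_pos.2 hn
  set c := lam1 / lam2 with hcdef
  have hc : 0 < c := div_pos hlam1 hlam2
  have hintc : Integrable fun θ : EuclideanSpace ℝ (Fin d) => Real.exp (-c * ‖θ‖ ^ 2) :=
    gauss_integrable hc
  -- Z0 is positive
  have hZ0pos : 0 < Z0 := by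
    rw [hZ0]
    rw [integral_pos_iff_support_of_nonneg (fun θ => (Real.exp_pos _).le) hintc]
    have hsupp : Function.support (fun θ : EuclideanSpace ℝ (Fin d) =>
        Real.exp (-c * ‖θ‖ ^ 2)) = Set.univ :=
      Set.eq_univ_of_forall fun θ => (Real.exp_pos _).ne'
    rw [hsupp]
    exact isOpen_univ.measure_pos _ ⟨0, trivial⟩
  have hp0pos : ∀ θ, 0 < p0 θ := fun θ => by rw [hp0]; positivity
  have hp0cont : Continuous p0 := by
    have : p0 = fun θ => Real.exp (-c * ‖θ‖ ^ 2) / Z0 := funext hp0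
    rw [this]
    exact ((continuous_const.mul (continuous_norm.pow 2)).rexp).div_const Z0
  have hp0meas : Measurable p0 := hp0cont.measurable
  have hp0int : Integrable p0 := by
    refine (hintc.div_const Z0).congr (Filter.Eventually.of_forall fun θ => ?_)
    rw [hp0]
  have hp0mass : (∫ θ, p0 θ) = 1 := by
    simp_rw [hp0]
    rw [integral_div, ← hZ0, div_self hZ0pos.ne']
  have hp0mom : Integrable (fun θ => p0 θ * ‖θ‖ ^ 2) := by
    refine ((gauss_sq_integrable hc).div_const Z0).congr
      (Filter.Eventually.of_forall fun θ => ?_)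
    simp only [hp0]; ring
  have hp0log : ∀ θ, Real.log (p0 θ) = -c * ‖θ‖ ^ 2 - Real.log Z0 := fun θ => by
    rw [hp0, Real.log_div (Real.exp_ne_zero _) hZ0pos.ne', Real.log_exp]
  have hp0ent : Integrable (fun θ => p0 θ * Real.log (p0 θ)) := by
    refine ((hp0mom.const_mul (-c)).add (hp0int.const_mul (-Real.log Z0))).congr
      (Filter.Eventually.of_forall fun θ => ?_)
    simp only [Pi.add_apply, hp0log θ]; ring
  have hAdmp0 : Adm d p0 :=
    ⟨hp0pos, by
      have : p0 = fun θ => Real.exp (-c * ‖θ‖ ^ 2) / Z0 := funext hp0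
      rw [this]
      exact (Real.contDiff_exp.comp (contDiff_const.mul (contDiff_norm_sq ℝ))).div_const Z0,
      hp0int, hp0mass, hp0mom, hp0ent⟩
  have hklp0 : (fun θ => p0 θ * Real.log (p0 θ / p0 θ)) = fun _ => (0 : ℝ) :=
    funext fun θ => by rw [div_self (hp0pos θ).ne', Real.log_one, mul_zero]
  haveI hne : Nonempty {q : EuclideanSpace ℝ (Fin d) → ℝ //
      Adm d q ∧ Integrable (fun θ => q θ * Real.log (q θ / p0 θ)) ∧
      (∫ θ, q θ * Real.log (q θ / p0 θ)) ≤ R} :=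
    ⟨⟨p0, hAdmp0, by rw [hklp0]; exact integrable_zero _ _ _, by rw [hklp0]; simpa using hR0⟩⟩
  -- notation
  set σ : (Fin n → Bool) → Fin n → ℝ := fun s i => if s i then (1 : ℝ) else -1 with hσ
  set f : (Fin n → Bool) → EuclideanSpace ℝ (Fin d) → ℝ :=
    fun s θ => (1 / (n : ℝ)) * ∑ i, σ s i * h θ (S i) with hfdef
  have hσ1 : ∀ s i, |σ s i| = 1 := fun s i => by
    simp only [hσ]; rcases s i <;> norm_num
  have hfmeas : ∀ s, Measurable (f s) := fun s => by
    simp only [hfdef]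
    exact (Finset.measurable_sum Finset.univ
      (fun i _ => (hmeas (S i)).const_mul (σ s i))).const_mul _
  have hfbdd : ∀ s θ, |f s θ| ≤ 1 := by
    intro s θ
    simp only [hfdef]
    have h1 : |∑ i, σ s i * h θ (S i)| ≤ (n : ℝ) := by
      calc |∑ i, σ s i * h θ (S i)| ≤ ∑ i, |σ s i * h θ (S i)| :=
            Finset.abs_sum_le_sum_abs _ _
      _ ≤ ∑ _i : Fin n, (1 : ℝ) := Finset.sum_le_sum fun i _ => by
            rw [abs_mul, hσ1 s i, one_mul]; exact hbdd θ (S i)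
      _ = n := by simp
    rw [abs_mul, abs_of_nonneg (by positivity : (0:ℝ) ≤ 1 / (n : ℝ))]
    calc (1 / (n : ℝ)) * |∑ i, σ s i * h θ (S i)| ≤ (1 / (n : ℝ)) * n := by gcongr
    _ = 1 := by field_simp
  -- integrability of the Gibbs factor
  have hZint : ∀ (β : ℝ) (s : Fin n → Bool),
      Integrable fun θ => p0 θ * Real.exp (β * f s θ) := by
    intro β s
    refine (hp0int.const_mul (Real.exp |β|)).mono'
      ((hp0meas.mul (Real.measurable_exp.comp ((hfmeas s).const_mul β))).aestronglyMeasurable)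
      (Filter.Eventually.of_forall fun θ => ?_)
    rw [Real.norm_eq_abs, abs_of_nonneg (mul_nonneg (hp0pos θ).le (Real.exp_pos _).le)]
    have hββ : β * f s θ ≤ |β| := by
      calc β * f s θ ≤ |β * f s θ| := le_abs_self _
      _ = |β| * |f s θ| := abs_mul _ _
      _ ≤ |β| * 1 := by gcongr; exact hfbdd s θ
      _ = |β| := mul_one _
    calc p0 θ * Real.exp (β * f s θ) ≤ p0 θ * Real.exp |β| := by
          have := hp0pos θ; gcongr
    _ = Real.exp |β| * p0 θ := mul_comm _ _
  -- the key per-sign-pattern, per-density bound (Gibbs variational inequality)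
  have keyq : ∀ (β : ℝ), 0 < β → ∀ (s : Fin n → Bool)
      (q : {q : EuclideanSpace ℝ (Fin d) → ℝ //
        Adm d q ∧ Integrable (fun θ => q θ * Real.log (q θ / p0 θ)) ∧
        (∫ θ, q θ * Real.log (q θ / p0 θ)) ≤ R}),
      (1 / (n : ℝ)) * ∑ i, σ s i * ∫ θ, h θ (S i) * q.1 θ ≤
        (R + (∫ θ, p0 θ * Real.exp (β * f s θ)) - 1) / β := by
    intro β hβ s q
    obtain ⟨⟨hqpos, hqsmooth, hqint, hqmass, hqmom, hqent⟩, hkl_int, hkl_le⟩ := q.2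
    have hqmeas : Measurable q.1 := hqsmooth.continuous.measurable
    have hhq : ∀ i, Integrable fun θ => h θ (S i) * q.1 θ := by
      intro i
      refine hqint.mono' ((hmeas (S i)).mul hqmeas).aestronglyMeasurable
        (Filter.Eventually.of_forall fun θ => ?_)
      rw [Real.norm_eq_abs, abs_mul]
      calc |h θ (S i)| * |q.1 θ| ≤ 1 * |q.1 θ| := by
            gcongr; exact hbdd θ (S i)
      _ = q.1 θ := by rw [one_mul, abs_of_pos (hqpos θ)]
    have hfq : Integrable fun θ => f s θ * q.1 θ := by
      refine hqint.mono' ((hfmeas s).mul hqmeas).aestronglyMeasurable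
        (Filter.Eventually.of_forall fun θ => ?_)
      rw [Real.norm_eq_abs, abs_mul]
      calc |f s θ| * |q.1 θ| ≤ 1 * |q.1 θ| := by gcongr; exact hfbdd s θ
      _ = q.1 θ := by rw [one_mul, abs_of_pos (hqpos θ)]
    have hbody : (1 / (n : ℝ)) * ∑ i, σ s i * ∫ θ, h θ (S i) * q.1 θ
        = ∫ θ, f s θ * q.1 θ := by
      calc (1 / (n : ℝ)) * ∑ i, σ s i * ∫ θ, h θ (S i) * q.1 θ
          = (1 / (n : ℝ)) * ∑ i, ∫ θ, σ s i * (h θ (S i) * q.1 θ) := by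
            congr 1
            exact Finset.sum_congr rfl fun i _ => (integral_const_mul _ _).symm
      _ = (1 / (n : ℝ)) * ∫ θ, ∑ i, σ s i * (h θ (S i) * q.1 θ) := by
            rw [integral_finset_sum _ fun i _ => (hhq i).const_mul _]
      _ = ∫ θ, (1 / (n : ℝ)) * ∑ i, σ s i * (h θ (S i) * q.1 θ) :=
            (integral_const_mul _ _).symm
      _ = ∫ θ, f s θ * q.1 θ := by
            congr 1
            funext θ
            simp only [hfdef]
            rw [mul_assoc, Finset.sum_mul]
            simp_rw [mul_assoc]
    have hgibbs : ∀ θ, β * (f s θ * q.1 θ) ≤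
        q.1 θ * Real.log (q.1 θ / p0 θ) + p0 θ * Real.exp (β * f s θ) - q.1 θ := by
      intro θ
      have ha : 0 < q.1 θ := hqpos θ
      have hb : 0 < p0 θ := hp0pos θ
      have hy : 0 < Real.exp (β * f s θ) * (p0 θ / q.1 θ) := by positivity
      have h1 := Real.log_le_sub_one_of_pos hy
      have h2 : Real.log (Real.exp (β * f s θ) * (p0 θ / q.1 θ))
          = β * f s θ - Real.log (q.1 θ / p0 θ) := by
        rw [Real.log_mul (Real.exp_ne_zero _) (by positivity), Real.log_exp,
          Real.log_div hb.ne' ha.ne', Real.log_div ha.ne' hb.ne']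
        ring
      rw [h2] at h1
      have h3 := mul_le_mul_of_nonneg_left h1 ha.le
      have h4 : q.1 θ * (Real.exp (β * f s θ) * (p0 θ / q.1 θ) - 1)
          = p0 θ * Real.exp (β * f s θ) - q.1 θ := by
        field_simp
      rw [h4] at h3
      nlinarith [h3]
    have hZq := hZint β s
    have h5 : Integrable (fun θ => q.1 θ * Real.log (q.1 θ / p0 θ)
        + p0 θ * Real.exp (β * f s θ)) := hkl_int.add hZq
    have h6 : Integrable (fun θ => q.1 θ * Real.log (q.1 θ / p0 θ)
        + p0 θ * Real.exp (β * f s θ) - q.1 θ) := h5.sub hqint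
    have hInt := integral_mono (hfq.const_mul β) h6 hgibbs
    rw [integral_const_mul] at hInt
    have heq : ∫ θ, (q.1 θ * Real.log (q.1 θ / p0 θ) + p0 θ * Real.exp (β * f s θ) - q.1 θ)
        = (∫ θ, q.1 θ * Real.log (q.1 θ / p0 θ)) + (∫ θ, p0 θ * Real.exp (β * f s θ)) - 1 := by
      rw [integral_sub h5 hqint, integral_add hkl_int hZq, hqmass]
    rw [heq] at hInt
    rw [hbody, le_div_iff₀ hβ]
    nlinarith [hInt, hkl_le]
  -- pointwise product-of-cosh bound
  have hpt : ∀ (β : ℝ) (θ : EuclideanSpace ℝ (Fin d)),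
      ∑ s : Fin n → Bool, Real.exp (β * f s θ)
        ≤ (2 ^ n : ℝ) * Real.exp (β ^ 2 / (2 * (n : ℝ))) := by
    intro β θ
    have hc1 : ∀ s : Fin n → Bool, Real.exp (β * f s θ)
        = ∏ i, Real.exp ((β / (n : ℝ)) * (σ s i * h θ (S i))) := by
      intro s
      rw [← Real.exp_sum]
      congr 1
      simp only [hfdef]
      rw [show β * ((1 / (n : ℝ)) * ∑ i, σ s i * h θ (S i))
          = (β / (n : ℝ)) * ∑ i, σ s i * h θ (S i) by ring, Finset.mul_sum]
    simp_rw [hc1]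
    have hps : ∑ s : Fin n → Bool, ∏ i, Real.exp ((β / (n : ℝ)) * (σ s i * h θ (S i)))
        = ∏ i, (Real.exp ((β / (n : ℝ)) * ((1 : ℝ) * h θ (S i)))
            + Real.exp ((β / (n : ℝ)) * ((-1 : ℝ) * h θ (S i)))) := by
      rw [← Fintype.prod_sum (fun i (b : Bool) =>
        Real.exp ((β / (n : ℝ)) * ((if b then (1:ℝ) else -1) * h θ (S i))))]
      congr 1
      funext i
      rw [Fintype.sum_bool]
      simp
    rw [hps]
    have hfac : ∀ i : Fin n, Real.exp ((β / (n : ℝ)) * ((1 : ℝ) * h θ (S i)))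
        + Real.exp ((β / (n : ℝ)) * ((-1 : ℝ) * h θ (S i)))
        ≤ 2 * Real.exp ((β / (n : ℝ)) ^ 2 / 2) := by
      intro i
      have e1 : Real.exp ((β / (n : ℝ)) * ((1 : ℝ) * h θ (S i)))
          + Real.exp ((β / (n : ℝ)) * ((-1 : ℝ) * h θ (S i)))
          = 2 * Real.cosh ((β / (n : ℝ)) * h θ (S i)) := by
        rw [show (β / (n:ℝ)) * ((1:ℝ) * h θ (S i)) = (β / (n:ℝ)) * h θ (S i) by ring,
          show (β / (n:ℝ)) * ((-1:ℝ) * h θ (S i)) = -((β / (n:ℝ)) * h θ (S i)) by ring,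
          Real.cosh_eq]
        ring
      rw [e1]
      have e2 : Real.cosh ((β / (n : ℝ)) * h θ (S i))
          ≤ Real.exp (((β / (n : ℝ)) * h θ (S i)) ^ 2 / 2) :=
        Real.cosh_le_exp_half_sq _
      have e3 : ((β / (n : ℝ)) * h θ (S i)) ^ 2 ≤ (β / (n : ℝ)) ^ 2 := by
        rw [mul_pow]
        have : (h θ (S i)) ^ 2 ≤ 1 := by
          have := hbdd θ (S i)
          nlinarith [abs_nonneg (h θ (S i)), sq_abs (h θ (S i))]
        nlinarith [sq_nonneg (β / (n : ℝ))]
      have e4 : Real.exp (((β / (n : ℝ)) * h θ (S i)) ^ 2 / 2)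
          ≤ Real.exp ((β / (n : ℝ)) ^ 2 / 2) := Real.exp_le_exp.2 (by linarith)
      linarith [e2.trans e4, Real.cosh_le_exp_half_sq ((β / (n : ℝ)) * h θ (S i))]
    calc ∏ i, (Real.exp ((β / (n : ℝ)) * ((1 : ℝ) * h θ (S i)))
            + Real.exp ((β / (n : ℝ)) * ((-1 : ℝ) * h θ (S i))))
        ≤ ∏ _i : Fin n, 2 * Real.exp ((β / (n : ℝ)) ^ 2 / 2) :=
          Finset.prod_le_prod (fun i _ => by positivity) (fun i _ => hfac i)
      _ = (2 * Real.exp ((β / (n : ℝ)) ^ 2 / 2)) ^ n := by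
          rw [Finset.prod_const, Finset.card_univ, Fintype.card_fin]
      _ = (2 ^ n : ℝ) * Real.exp ((β / (n : ℝ)) ^ 2 / 2) ^ n := mul_pow _ _ _
      _ = (2 ^ n : ℝ) * Real.exp (β ^ 2 / (2 * (n : ℝ))) := by
          rw [← Real.exp_nat_mul]
          congr 1
          field_simp
  -- sum of the partition functions
  have hZsum : ∀ (β : ℝ), ∑ s : Fin n → Bool, (∫ θ, p0 θ * Real.exp (β * f s θ))
      ≤ (2 ^ n : ℝ) * Real.exp (β ^ 2 / (2 * (n : ℝ))) := by
    intro β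
    rw [← integral_finset_sum _ fun s _ => hZint β s]
    have h2 : Integrable fun θ => (2 ^ n : ℝ) * Real.exp (β ^ 2 / (2 * (n : ℝ))) * p0 θ :=
      hp0int.const_mul _
    calc (∫ θ, ∑ s : Fin n → Bool, p0 θ * Real.exp (β * f s θ))
        ≤ ∫ θ, (2 ^ n : ℝ) * Real.exp (β ^ 2 / (2 * (n : ℝ))) * p0 θ := by
          refine integral_mono (integrable_finset_sum _ fun s _ => hZint β s) h2 fun θ => ?_
          rw [← Finset.mul_sum]
          calc p0 θ * ∑ s : Fin n → Bool, Real.exp (β * f s θ)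
              ≤ p0 θ * ((2 ^ n : ℝ) * Real.exp (β ^ 2 / (2 * (n : ℝ)))) := by
                have := hp0pos θ; gcongr; exact hpt β θ
            _ = (2 ^ n : ℝ) * Real.exp (β ^ 2 / (2 * (n : ℝ))) * p0 θ := by ring
      _ = (2 ^ n : ℝ) * Real.exp (β ^ 2 / (2 * (n : ℝ))) := by
          rw [integral_const_mul, hp0mass, mul_one]
  -- master bound: for every β > 0
  have master : ∀ β : ℝ, 0 < β → (1 / (2:ℝ) ^ n) * ∑ s : Fin n → Bool,
      (⨆ q : {q : EuclideanSpace ℝ (Fin d) → ℝ //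
          Adm d q ∧ Integrable (fun θ => q θ * Real.log (q θ / p0 θ)) ∧
          (∫ θ, q θ * Real.log (q θ / p0 θ)) ≤ R},
        (1 / (n : ℝ)) * ∑ i, σ s i * ∫ θ, h θ (S i) * q.1 θ)
      ≤ (R - 1 + Real.exp (β ^ 2 / (2 * (n : ℝ)))) / β := by
    intro β hβ
    have h1 : ∀ s : Fin n → Bool,
        (⨆ q : {q : EuclideanSpace ℝ (Fin d) → ℝ //
            Adm d q ∧ Integrable (fun θ => q θ * Real.log (q θ / p0 θ)) ∧
            (∫ θ, q θ * Real.log (q θ / p0 θ)) ≤ R},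
          (1 / (n : ℝ)) * ∑ i, σ s i * ∫ θ, h θ (S i) * q.1 θ)
        ≤ (R + (∫ θ, p0 θ * Real.exp (β * f s θ)) - 1) / β :=
      fun s => ciSup_le fun q => keyq β hβ s q
    have hsum : ∑ s : Fin n → Bool, (R + (∫ θ, p0 θ * Real.exp (β * f s θ)) - 1)
        = (2 ^ n : ℝ) * (R - 1)
          + ∑ s : Fin n → Bool, ∫ θ, p0 θ * Real.exp (β * f s θ) := by
      have hcard : (Finset.univ : Finset (Fin n → Bool)).card = 2 ^ n := by simp
      calc ∑ s : Fin n → Bool, (R + (∫ θ, p0 θ * Real.exp (β * f s θ)) - 1)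
          = ∑ s : Fin n → Bool, ((R - 1) + ∫ θ, p0 θ * Real.exp (β * f s θ)) :=
            Finset.sum_congr rfl fun s _ => by ring
        _ = ∑ _s : Fin n → Bool, (R - 1)
            + ∑ s : Fin n → Bool, ∫ θ, p0 θ * Real.exp (β * f s θ) :=
            Finset.sum_add_distrib
        _ = (2 ^ n : ℝ) * (R - 1)
            + ∑ s : Fin n → Bool, ∫ θ, p0 θ * Real.exp (β * f s θ) := by
            rw [Finset.sum_const, hcard, nsmul_eq_mul]
            push_cast
            ring
    have hSZ : (∑ s : Fin n → Bool, ∫ θ, p0 θ * Real.exp (β * f s θ))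
        ≤ Real.exp (β ^ 2 / (2 * (n : ℝ))) * 2 ^ n := (hZsum β).trans_eq (mul_comm _ _)
    have hpos : (0:ℝ) ≤ 1 / (2:ℝ) ^ n := by positivity
    refine le_trans (mul_le_mul_of_nonneg_left
      (Finset.sum_le_sum fun s _ => h1 s) hpos) ?_
    calc (1 / (2:ℝ) ^ n) * ∑ s : Fin n → Bool,
            (R + (∫ θ, p0 θ * Real.exp (β * f s θ)) - 1) / β
        = ((R - 1) + (∑ s : Fin n → Bool, ∫ θ, p0 θ * Real.exp (β * f s θ)) / 2 ^ n) / β := by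
          rw [← Finset.sum_div, hsum]
          field_simp
      _ ≤ ((R - 1) + Real.exp (β ^ 2 / (2 * (n : ℝ)))) / β := by
          gcongr
          rw [div_le_iff₀ (by positivity : (0:ℝ) < (2:ℝ) ^ n)]
          exact hSZ
      _ = (R - 1 + Real.exp (β ^ 2 / (2 * (n : ℝ)))) / β := by ring_nf
  -- elementary bound on the exponential
  have hexp2 : ∀ t : ℝ, 0 ≤ t → t ≤ 1 → Real.exp t ≤ 1 + t + t ^ 2 := by
    intro t h1 h2
    have hb := Real.exp_bound (x := t) (by rw [abs_of_nonneg h1]; exact h2)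
      (by norm_num : 0 < 3)
    have hsum : ∑ i ∈ Finset.range 3, t ^ i / (Nat.factorial i) = 1 + t + t ^ 2 / 2 := by
      norm_num [Finset.sum_range_succ, Nat.factorial]
    rw [hsum, abs_of_nonneg h1] at hb
    norm_num [Nat.factorial] at hb
    have hb2 := (abs_le.1 hb).2
    have ht3 : t ^ 3 ≤ t ^ 2 := by nlinarith
    nlinarith
  -- final optimization over β
  have final : ∀ L : ℝ,
      (∀ β : ℝ, 0 < β → L ≤ (R - 1 + Real.exp (β ^ 2 / (2 * (n : ℝ)))) / β) →
      L ≤ 2 * Real.sqrt (R / (n : ℝ)) := by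
    intro L hL
    have hn1 : (1:ℝ) ≤ (n:ℝ) := by exact_mod_cast hn
    rcases hR0.eq_or_lt with h0 | h0
    · -- R = 0
      have hz : Real.sqrt (R / (n : ℝ)) = 0 := by rw [← h0, zero_div, Real.sqrt_zero]
      rw [hz, mul_zero]
      by_contra hcon
      push_neg at hcon
      set β := min 1 (L / 2) with hβdef
      have hβ : 0 < β := lt_min one_pos (by linarith)
      have hβ1 : β ≤ 1 := min_le_left _ _
      have hβL : β ≤ L / 2 := min_le_right _ _
      set t := β ^ 2 / (2 * (n : ℝ)) with htdef
      have ht0 : 0 ≤ t := by positivity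
      have htβ : t ≤ β ^ 2 / 2 := by
        rw [htdef]
        gcongr
        linarith
      have ht1 : t ≤ 1 := by nlinarith
      have hexp := hexp2 t ht0 ht1
      have hnum : R - 1 + Real.exp t ≤ β ^ 2 := by
        rw [← h0]
        nlinarith
      have hLβ : L ≤ β := by
        have hm := hL β hβ
        have h9 : (R - 1 + Real.exp (β ^ 2 / (2 * (n : ℝ)))) / β ≤ β ^ 2 / β := by
          gcongr
        have h10 := hm.trans h9
        rwa [sq, mul_div_assoc, div_self hβ.ne', mul_one] at h10
      linarith
    · -- R > 0
      set β := Real.sqrt (2 * (n : ℝ) * R) with hβdef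
      have hβ : 0 < β := Real.sqrt_pos.2 (by positivity)
      have hβsq : β ^ 2 = 2 * (n : ℝ) * R := Real.sq_sqrt (by positivity)
      have ht : β ^ 2 / (2 * (n : ℝ)) = R := by rw [hβsq]; field_simp
      have hmaster := hL β hβ
      rw [ht] at hmaster
      have hexp : Real.exp R ≤ 1 + R + R ^ 2 := hexp2 R hR0 (by linarith)
      have h7 : L ≤ (2 * R + R ^ 2) / β :=
        hmaster.trans ((div_le_div_iff_of_pos_right hβ).2 (by linarith))
      refine h7.trans ?_
      rw [div_le_iff₀ hβ]
      have hs : 2 * Real.sqrt (R / (n : ℝ)) * β = 2 * (Real.sqrt 2 * R) := by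
        rw [hβdef, mul_assoc, ← Real.sqrt_mul (by positivity : (0:ℝ) ≤ R / (n : ℝ)),
          show (R / (n : ℝ)) * (2 * (n : ℝ) * R) = 2 * R ^ 2 by field_simp,
          Real.sqrt_mul (by norm_num : (0:ℝ) ≤ 2), Real.sqrt_sq hR0]
      rw [hs]
      have hsqrt2 : (7:ℝ) / 5 ≤ Real.sqrt 2 := by
        nlinarith [Real.sq_sqrt (show (0:ℝ) ≤ 2 by norm_num), Real.sqrt_nonneg 2]
      nlinarith [hsqrt2, hR, h0]
  exact final _ master
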